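/- Let 𝒜 be a unital associative ℂ-algebra with unit 1, C^+(𝒜) = ⊕_{n≥1} C^n(𝒜) the space of multilinear forms of degree ≥ 1, m*_q the dual-of-product map m*_q(ω)(x_0,…,x_n) = ∑_{k=1}^n q^{k−1} ω(x_0,…,x_{k−1}x_k,…,x_n), and h the degree −1 map defined by h(ω)(x_1,…,x_{n−1}) = ω(1, x_1,…,x_{n−1}) for ω ∈ C^n(𝒜), n ≥ 2, and h = 0 on C^1(𝒜). Then on C^+(𝒜) one has h∘m*_q − q·m*_q∘h = I. Consequently, if q is a primitive N-th root of unity, the generalized cohomologies H^{(k),n}(C(𝒜), m*_q) vanish for all k ∈ {1,…,N−1} and n ≥ 1. -/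

import Mathlib

/-- A multilinear `n`-form on `𝒜`, encoded as a function of infinite tuples
depending only on `x 0, …, x (n-1)` and linear in each of them. -/
def IsMForm {A : Type*} [Ring A] [Algebra ℂ A] (n : ℕ) (ω : (ℕ → A) → ℂ) : Prop :=
  (∀ x y : ℕ → A, (∀ i < n, x i = y i) → ω x = ω y) ∧
  (∀ i < n, ∀ (x : ℕ → A) (c : ℂ) (u v : A),
    ω (Function.update x i (c • u + v))
      = c * ω (Function.update x i u) + ω (Function.update x i v))

/-- The dual of the product, `m*_q`, on `n`-forms. -/
noncomputable def mStar {A : Type*} [Ring A] [Algebra ℂ A] (q : ℂ) (n : ℕ)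
    (ω : (ℕ → A) → ℂ) : (ℕ → A) → ℂ :=
  fun x => ∑ k ∈ Finset.Icc 1 n, q ^ (k - 1) *
    ω (fun i => if i < k - 1 then x i
                else if i = k - 1 then x (k - 1) * x k else x (i + 1))

/-- Iterates of `m*_q`, starting from degree `n`. -/
noncomputable def mStarIter {A : Type*} [Ring A] [Algebra ℂ A] (q : ℂ) :
    ℕ → ℕ → ((ℕ → A) → ℂ) → ((ℕ → A) → ℂ)
  | 0, _, ω => ω
  | m + 1, n, ω => mStar q (n + m) (mStarIter q m n ω)

/-- The homotopy `h` of degree `-1`: `h(ω)(x_1,…,x_{n-1}) = ω(1,x_1,…,x_{n-1})`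
for `ω ∈ C^n(𝒜)`, `n ≥ 2`, and `h = 0` on `C^1(𝒜)`. -/
noncomputable def hHomotopy {A : Type*} [Ring A] [Algebra ℂ A] (n : ℕ)
    (ω : (ℕ → A) → ℂ) : (ℕ → A) → ℂ :=
  if n ≤ 1 then 0 else fun x => ω (fun i => if i = 0 then 1 else x (i - 1))

section Aux
variable {A : Type*} [Ring A] [Algebra ℂ A]

lemma isMForm_zero (n : ℕ) : IsMForm (A := A) n (fun _ => 0) :=
  ⟨fun _ _ _ => rfl, fun _ _ _ c _ _ => by ring⟩

lemma IsMForm.addMul {n : ℕ} {ω η : (ℕ → A) → ℂ} (hω : IsMForm n ω) (hη : IsMForm n η)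
    (c : ℂ) : IsMForm n (fun x => ω x + c * η x) := by
  constructor
  · intro x y h; dsimp only; rw [hω.1 x y h, hη.1 x y h]
  · intro i hi x c' u v
    dsimp only; rw [hω.2 i hi x c' u v, hη.2 i hi x c' u v]; ring

lemma mStar_zero (q : ℂ) (n : ℕ) : mStar (A := A) q n (fun _ => 0) = fun _ => 0 := by
  funext x; simp [mStar]

lemma mStar_comb (q : ℂ) (n : ℕ) (a c : ℂ) (α β : (ℕ → A) → ℂ) :
    mStar q n (fun x => a * α x + c * β x)
      = fun y => a * mStar q n α y + c * mStar q n β y := by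
  funext y
  simp only [mStar, Finset.mul_sum, ← Finset.sum_add_distrib]
  exact Finset.sum_congr rfl fun k _ => by ring

lemma mStarIter_comb (q : ℂ) (m n : ℕ) (a c : ℂ) (α β : (ℕ → A) → ℂ) :
    mStarIter q m n (fun x => a * α x + c * β x)
      = fun y => a * mStarIter q m n α y + c * mStarIter q m n β y := by
  induction m with
  | zero => rfl
  | succ m ih =>
    show mStar q (n + m) _ = _
    rw [ih, mStar_comb]
    rfl

lemma mStarIter_succ' (q : ℂ) (m n : ℕ) (ω : (ℕ → A) → ℂ) :
    mStarIter q (m + 1) n ω = mStarIter q m (n + 1) (mStar q n ω) := by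
  induction m with
  | zero => show mStar q (n + 0) ω = mStar q n ω; rw [Nat.add_zero]
  | succ m ih =>
    show mStar q (n + (m+1)) (mStarIter q (m+1) n ω) = mStar q (n + 1 + m) _
    rw [ih, show n + (m+1) = n + 1 + m by omega]

end Aux

section Forms
variable {A : Type*} [Ring A] [Algebra ℂ A]

lemma isMForm_hHomotopy {n : ℕ} {ω : (ℕ → A) → ℂ} (hω : IsMForm n ω) :
    IsMForm (n - 1) (hHomotopy n ω) := by
  unfold hHomotopy
  by_cases hn : n ≤ 1
  · rw [if_pos hn]
    exact isMForm_zero _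
  · rw [if_neg hn]
    constructor
    · intro x y h
      apply hω.1
      intro i hi
      by_cases h0 : i = 0
      · simp [h0]
      · simp only [if_neg h0]
        exact h (i - 1) (by omega)
    · intro i hi x c u v
      have key : ∀ w : A, (fun j => if j = 0 then 1 else Function.update x i w (j - 1))
          = Function.update (fun j => if j = 0 then (1:A) else x (j - 1)) (i + 1) w := by
        intro w
        funext j
        simp only [Function.update_apply]
        split_ifs <;> first | rfl | omega
      dsimp only
      rw [key, key, key]
      exact hω.2 (i + 1) (by omega) _ c u v

lemma isMForm_mStar {q : ℂ} {n : ℕ} {ω : (ℕ → A) → ℂ} (hω : IsMForm n ω) :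
    IsMForm (n + 1) (mStar q n ω) := by
  constructor
  · intro x y hxy
    unfold mStar
    refine Finset.sum_congr rfl fun k hk => ?_
    simp only [Finset.mem_Icc] at hk
    congr 1
    apply hω.1
    intro i hi
    by_cases h1 : i < k - 1
    · simp only [if_pos h1]; exact hxy i (by omega)
    · simp only [if_neg h1]
      by_cases h2 : i = k - 1
      · simp only [if_pos h2]
        rw [hxy (k - 1) (by omega), hxy k (by omega)]
      · simp only [if_neg h2]; exact hxy (i + 1) (by omega)
  · intro i hi x c u v
    unfold mStar
    rw [Finset.mul_sum, ← Finset.sum_add_distrib]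
    refine Finset.sum_congr rfl fun k hk => ?_
    simp only [Finset.mem_Icc] at hk
    set Z : (ℕ → A) → (ℕ → A) := fun x' => fun j =>
      if j < k - 1 then x' j else if j = k - 1 then x' (k - 1) * x' k else x' (j + 1) with hZ
    show q ^ (k-1) * ω (Z (Function.update x i (c • u + v)))
        = c * (q ^ (k-1) * ω (Z (Function.update x i u))) + q ^ (k-1) * ω (Z (Function.update x i v))
    rcases lt_or_ge i (k - 1) with hik | hik
    · have key : ∀ w : A, Z (Function.update x i w) = Function.update (Z x) i w := by
        intro w
        funext j
        simp only [hZ, Function.update_apply]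
        split_ifs <;> first | rfl | omega
      rw [key, key, key, hω.2 i (by omega) _ c u v]
      ring
    · rcases eq_or_lt_of_le hik with hik1 | hik1
      · -- i = k - 1
        have key : ∀ w : A, Z (Function.update x i w)
            = Function.update (Z x) (k - 1) (w * x k) := by
          intro w
          funext j
          simp only [hZ, Function.update_apply]
          split_ifs <;> first | rfl | omega
        rw [key, key, key, show (c • u + v) * x k = c • (u * x k) + v * x k by
              rw [add_mul, smul_mul_assoc],
          hω.2 (k - 1) (by omega) _ c (u * x k) (v * x k)]
        ring
      · rcases Nat.lt_or_ge k i with hik2 | hik2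
        · -- i > k
          have key : ∀ w : A, Z (Function.update x i w) = Function.update (Z x) (i - 1) w := by
            intro w
            funext j
            simp only [hZ, Function.update_apply]
            split_ifs <;> first | rfl | omega
          rw [key, key, key, hω.2 (i - 1) (by omega) _ c u v]
          ring
        · -- i = k
          have hik3 : i = k := by omega
          have key : ∀ w : A, Z (Function.update x i w)
              = Function.update (Z x) (k - 1) (x (k - 1) * w) := by
            intro w
            funext j
            simp only [hZ, Function.update_apply]
            split_ifs <;> first | rfl | omega
          rw [key, key, key, show x (k - 1) * (c • u + v) = c • (x (k - 1) * u) + x (k - 1) * v by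
                rw [mul_add, mul_smul_comm],
            hω.2 (k - 1) (by omega) _ c (x (k - 1) * u) (x (k - 1) * v)]
          ring

end Forms

section Homotopy
variable {A : Type*} [Ring A] [Algebra ℂ A]

lemma homotopy_id (q : ℂ) {n : ℕ} (hn : 1 ≤ n) (ω : (ℕ → A) → ℂ) (x : ℕ → A) :
    hHomotopy (n + 1) (mStar q n ω) x
      = q * mStar q (n - 1) (hHomotopy n ω) x + ω x := by
  obtain ⟨p, rfl⟩ : ∃ p, n = p + 1 := ⟨n - 1, by omega⟩
  set y : ℕ → A := fun i => if i = 0 then 1 else x (i - 1) with hy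
  have hL : hHomotopy (p + 1 + 1) (mStar q (p + 1) ω) x = mStar q (p + 1) ω y := by
    unfold hHomotopy
    rw [if_neg (by omega)]
  rw [hL]
  -- expand the LHS sum
  unfold mStar
  rw [← Finset.Ico_add_one_right_eq_Icc, Finset.sum_Ico_eq_sum_range]
  simp only [show p + 1 + 1 - 1 = p + 1 by omega]
  rw [Finset.sum_range_succ']
  have hZ1 : (fun i => if i < 1 - 1 then y i
      else if i = 1 - 1 then y (1 - 1) * y 1 else y (i + 1)) = x := by
    funext j
    rcases Nat.eq_zero_or_pos j with h | h
    · subst h; simp [hy]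
    · simp only [hy]
      rw [if_neg (by omega), if_neg (by omega), if_neg (by omega : ¬ j + 1 = 0)]
      congr 1
  rw [show (1:ℕ) + 0 = 1 from rfl, hZ1]
  norm_num
  rcases Nat.eq_zero_or_pos p with hp | hp
  · subst hp
    simp
  · have hR : hHomotopy (p + 1) ω
        = fun z => ω (fun i => if i = 0 then 1 else z (i - 1)) := by
      unfold hHomotopy; rw [if_neg (by omega)]
    rw [hR, ← Finset.Ico_add_one_right_eq_Icc, Finset.sum_Ico_eq_sum_range, Finset.mul_sum]
    norm_num
    refine Finset.sum_congr rfl fun k hk => ?_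
    have harg : (fun i => if i < k + 1 then y i
          else if i = k + 1 then y (k + 1) * y (1 + (k + 1)) else y (i + 1))
        = (fun i => if i = 0 then (1:A)
            else if i - 1 < k then x (i - 1)
            else if i - 1 = k then x k * x (1 + k) else x (i - 1 + 1)) := by
      funext i
      simp only [hy]
      split_ifs <;>
        first
          | rfl
          | omega
          | (exfalso; assumption)
          | (congr 1 <;> first | omega | (congr 1; omega))
    simp only [Nat.lt_add_one_iff] at harg
    rw [harg]
    ring

end Homotopy

section Iterates
variable {A : Type*} [Ring A] [Algebra ℂ A]

lemma qsum_ne_zero {q : ℂ} {N : ℕ} (hN : 2 ≤ N) (hq : IsPrimitiveRoot q N)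
    {m : ℕ} (hm1 : 1 ≤ m) (hm2 : m ≤ N - 1) :
    (∑ i ∈ Finset.range m, q ^ i) ≠ 0 := by
  have hq1 : q ≠ 1 := by
    intro h
    have h2 := hq.dvd_of_pow_eq_one 1 (by rw [h, one_pow])
    rw [Nat.dvd_one] at h2
    omega
  rw [geom_sum_eq hq1]
  apply div_ne_zero
  · intro h
    have hpow : q ^ m = 1 := by
      have := sub_eq_zero.mp h
      simpa using this
    have hd := hq.dvd_of_pow_eq_one m hpow
    have := Nat.le_of_dvd (by omega) hd
    omega
  · exact sub_ne_zero.mpr hq1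

lemma hd_pow (q : ℂ) : ∀ j, 1 ≤ j → ∀ n, 1 ≤ n → ∀ ω : (ℕ → A) → ℂ,
    hHomotopy (n + j) (mStarIter q j n ω)
      = fun x => q ^ j * mStarIter q j (n - 1) (hHomotopy n ω) x
          + (∑ i ∈ Finset.range j, q ^ i) * mStarIter q (j - 1) n ω x := by
  intro j hj
  induction j, hj using Nat.le_induction with
  | base =>
    intro n hn ω
    funext x
    have h1 : mStarIter q 1 n ω = mStar q n ω := by
      show mStar q (n + 0) ω = mStar q n ω
      rw [Nat.add_zero]
    have h2 : mStarIter q 1 (n - 1) (hHomotopy n ω) = mStar q (n - 1) (hHomotopy n ω) := by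
      show mStar q (n - 1 + 0) (mStarIter q 0 (n-1) (hHomotopy n ω)) = _
      rw [Nat.add_zero]
      rfl
    rw [h1, h2, homotopy_id q hn ω x]
    simp [mStarIter]
  | succ j hj ih =>
    intro n hn ω
    funext x
    have hiter : mStarIter q (j + 1) n ω = mStar q (n + j) (mStarIter q j n ω) := rfl
    have hdeg : n + (j + 1) = (n + j) + 1 := by omega
    rw [hiter, hdeg, homotopy_id q (by omega) (mStarIter q j n ω) x, ih n hn ω, mStar_comb]
    have e1 : mStar q (n + j - 1) (mStarIter q j (n - 1) (hHomotopy n ω))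
        = mStarIter q (j + 1) (n - 1) (hHomotopy n ω) := by
      show _ = mStar q (n - 1 + j) _
      rw [show n - 1 + j = n + j - 1 by omega]
    have e2 : mStar q (n + j - 1) (mStarIter q (j - 1) n ω) = mStarIter q j n ω := by
      conv_rhs => rw [show j = (j - 1) + 1 by omega]
      show _ = mStar q (n + (j - 1)) _
      rw [show n + (j - 1) = n + j - 1 by omega]
    dsimp only
    rw [e1, e2, show j + 1 - 1 = j by omega, geom_sum_succ]
    ring

end Iterates

section Main
variable {A : Type*} [Ring A] [Algebra ℂ A]

lemma mStar_addMul (q : ℂ) (n : ℕ) (c : ℂ) (α β : (ℕ → A) → ℂ) :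
    mStar q n (fun x => α x + c * β x)
      = fun y => mStar q n α y + c * mStar q n β y := by
  have := mStar_comb q n 1 c α β
  simpa using this

lemma mStarIter_addMul (q : ℂ) (m n : ℕ) (c : ℂ) (α β : (ℕ → A) → ℂ) :
    mStarIter q m n (fun x => α x + c * β x)
      = fun y => mStarIter q m n α y + c * mStarIter q m n β y := by
  have := mStarIter_comb q m n 1 c α β
  simpa using this

lemma contraction (q : ℂ) (N : ℕ) (hN : 2 ≤ N) (hq : IsPrimitiveRoot q N) :
    ∀ k, k ≤ N - 1 → ∀ n, 1 ≤ n → ∀ ω : (ℕ → A) → ℂ, IsMForm n ω →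
      (∀ x, mStarIter q k n ω x = 0) →
      ∃ τ, IsMForm (n - 1) τ ∧ ω = mStar q (n - 1) τ := by
  intro k
  induction k with
  | zero =>
    intro _ n hn ω hform hz
    refine ⟨fun _ => 0, isMForm_zero _, ?_⟩
    funext x
    rw [mStar_zero]
    exact hz x
  | succ k ih =>
    intro hk n hn ω hform hz
    have hSne : (∑ i ∈ Finset.range (k + 1), q ^ i) ≠ 0 :=
      qsum_ne_zero hN hq (by omega) (by omega)
    set S := ∑ i ∈ Finset.range (k + 1), q ^ i with hS
    set c : ℂ := q ^ (k + 1) / S with hc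
    have hformη : IsMForm n (mStar q (n - 1) (hHomotopy n ω)) := by
      have := isMForm_mStar (q := q) (isMForm_hHomotopy hform)
      rwa [show n - 1 + 1 = n by omega] at this
    have hform' : IsMForm n
        (fun x => ω x + c * mStar q (n - 1) (hHomotopy n ω) x) :=
      hform.addMul hformη c
    have hη2 : mStarIter q k n (mStar q (n - 1) (hHomotopy n ω))
        = mStarIter q (k + 1) (n - 1) (hHomotopy n ω) := by
      rw [mStarIter_succ', show n - 1 + 1 = n by omega]
    have hkey : ∀ x, q ^ (k + 1) * mStarIter q (k + 1) (n - 1) (hHomotopy n ω) x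
        + S * mStarIter q k n ω x = 0 := by
      intro x
      have h0 := congrFun (hd_pow q (k + 1) (by omega) n hn ω) x
      have hLz : hHomotopy (n + (k + 1)) (mStarIter q (k + 1) n ω) x = 0 := by
        unfold hHomotopy
        rw [if_neg (by omega)]
        exact hz _
      rw [hLz, show k + 1 - 1 = k from rfl] at h0
      rw [← hS] at h0
      linear_combination -h0
    have hz' : ∀ x, mStarIter q k n
        (fun x => ω x + c * mStar q (n - 1) (hHomotopy n ω) x) x = 0 := by
      intro x
      rw [mStarIter_addMul]
      try dsimp only
      rw [hη2]
      have hk2 := hkey x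
      rw [hc]
      field_simp
      linear_combination hk2
    obtain ⟨τ', hτ'f, hτ'⟩ := ih (by omega) n hn _ hform' hz'
    refine ⟨fun x => τ' x + (-c) * hHomotopy n ω x,
      hτ'f.addMul (isMForm_hHomotopy hform) (-c), ?_⟩
    funext x
    rw [mStar_addMul]
    try dsimp only
    rw [← congrFun hτ' x]
    try dsimp only
    ring

lemma acyc (q : ℂ) (N : ℕ) (hN : 2 ≤ N) (hq : IsPrimitiveRoot q N) :
    ∀ j, 1 ≤ j → j ≤ N - 1 → ∀ n, 1 ≤ n → ∀ ω : (ℕ → A) → ℂ, IsMForm n ω →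
      (∀ x, mStarIter q (N - j) n ω x = 0) →
      ((j ≤ n → ∃ η, IsMForm (n - j) η ∧ ∀ x, mStarIter q j (n - j) η x = ω x) ∧
        (n < j → ∀ x, ω x = 0)) := by
  intro j hj
  induction j, hj using Nat.le_induction with
  | base =>
    intro _ n hn ω hform hz
    obtain ⟨τ, hτf, hτ⟩ := contraction q N hN hq (N - 1) (by omega) n hn ω hform
      (by intro x; rw [show N - 1 = N - 1 from rfl]; exact hz x)
    constructor
    · intro _
      refine ⟨τ, hτf, fun x => ?_⟩
      have : mStarIter q 1 (n - 1) τ = mStar q (n - 1) τ := by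
        show mStar q (n - 1 + 0) (mStarIter q 0 (n - 1) τ) = _
        rw [Nat.add_zero]
        rfl
      rw [this, ← hτ]
    · intro h
      omega
  | succ j hj ih =>
    intro hjN n hn ω hform hz
    obtain ⟨τ, hτf, hτ⟩ := contraction q N hN hq (N - (j + 1)) (by omega) n hn ω hform hz
    rcases Nat.lt_or_ge n 2 with hn2 | hn2
    · -- n = 1 : ω = mStar q 0 τ = 0
      have hn1 : n = 1 := by omega
      have hω0 : ∀ x, ω x = 0 := by
        intro x
        rw [hτ, hn1]
        show (∑ k ∈ Finset.Icc 1 0, _) = (0:ℂ)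
        simp
      exact ⟨fun h => absurd h (by omega), fun _ => hω0⟩
    · -- n ≥ 2 : apply IH to τ
      have hzτ : ∀ x, mStarIter q (N - j) (n - 1) τ x = 0 := by
        intro x
        rw [show N - j = (N - (j + 1)) + 1 by omega, mStarIter_succ',
          show n - 1 + 1 = n by omega, ← hτ]
        exact hz x
      have H := ih (by omega) (n - 1) (by omega) τ hτf hzτ
      constructor
      · intro hjn
        obtain ⟨η, hηf, hη⟩ := H.1 (by omega)
        refine ⟨η, by rwa [show n - 1 - j = n - (j + 1) by omega] at hηf, fun x => ?_⟩
        have hstep : mStarIter q (j + 1) (n - (j + 1)) η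
            = mStar q (n - 1) (mStarIter q j (n - (j + 1)) η) := by
          show mStar q (n - (j + 1) + j) _ = _
          rw [show n - (j + 1) + j = n - 1 by omega]
        rw [hstep]
        have hfun : mStarIter q j (n - (j + 1)) η = τ := by
          funext z
          rw [show n - (j + 1) = n - 1 - j by omega]
          exact hη z
        rw [hfun, ← hτ]
      · intro hnj
        have hτ0 : ∀ x, τ x = 0 := H.2 (by omega)
        intro x
        rw [hτ]
        have : τ = fun _ => (0:ℂ) := funext hτ0
        rw [this, mStar_zero]

end Main

/-- on `C^+(𝒜)` one has `h ∘ m*_q - q · m*_q ∘ h = I`; hence if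
`q` is a primitive `N`-th root of unity, the generalized cohomologies
`H^(k),n(C(𝒜), m*_q)` vanish for `1 ≤ k ≤ N-1` and `n ≥ 1`: any `n`-form
killed by `(m*_q)^k` lies in the image of `(m*_q)^(N-k)` (from degree
`n-(N-k)`, the degree-`< 0` spaces being zero). -/
theorem mstar_homotopy_and_acyclicity
    (A : Type*) [Ring A] [Algebra ℂ A]
    (N : ℕ) (hN : 2 ≤ N) (q : ℂ) (hq : IsPrimitiveRoot q N) :
    (∀ n : ℕ, 1 ≤ n → ∀ ω : (ℕ → A) → ℂ, IsMForm n ω →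
      ∀ x, hHomotopy (n + 1) (mStar q n ω) x - q * mStar q (n - 1) (hHomotopy n ω) x
        = ω x) ∧
    (∀ n : ℕ, 1 ≤ n → ∀ k : ℕ, 1 ≤ k → k ≤ N - 1 →
      ∀ ω : (ℕ → A) → ℂ, IsMForm n ω → (∀ x, mStarIter q k n ω x = 0) →
        ((N - k ≤ n → ∃ η : (ℕ → A) → ℂ, IsMForm (n - (N - k)) η ∧
            ∀ x, mStarIter q (N - k) (n - (N - k)) η x = ω x) ∧
         (n < N - k → ∀ x, ω x = 0))) := by
  constructor
  · intro n hn ω _ x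
    rw [homotopy_id q hn ω x]
    ring
  · intro n hn k hk1 hk2 ω hform hz
    exact acyc q N hN hq (N - k) (by omega) (by omega) n hn ω hform
      (by intro x; rw [show N - (N - k) = k by omega]; exact hz x)
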